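/- arXiv:1910.03265 — 4 statements merged into one kernel-verified Lean document; each statement's English description precedes it below -/
import Mathlib

section
/- Let Ω be a nonempty finite type, M : Ω → PMF Ω a Markov transition kernel, and π : PMF Ω a stationary distribution for M (i.e. π.bind M = π). Let C : Ω × Ω → PMF (Ω × Ω) be a Markovian coupling of M with itself, i.e. for every pair (x,y), the pushforward of C (x,y) under Prod.fst equals M x and the pushforward under Prod.snd equals M y. Let K^t denote the t-fold iterate of C (t-step joint kernel) and M^t the t-fold iterate of M. Suppose p ∈ [0,1] and t is a positive integer such that for all initial states x₀, y₀, the probability under K^t (x₀,y₀) of the diagonal event {(a,b) : a = b} is at least p. Then for every initial state x₀, the total variation distance between the distribution M^t started from x₀ and π is at most 1 − p. -/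
open scoped Classical

/-- The `t`-step distribution of the Markov chain with kernel `M` started at `x`. -/
noncomputable def stepsPMF {Ω : Type*} (M : Ω → PMF Ω) : ℕ → Ω → PMF Ω
  | 0, x => PMF.pure x
  | (t + 1), x => (M x).bind (stepsPMF M t)

/-- Total variation distance between two probability distributions on a finite type. -/
noncomputable def tvDist {Ω : Type*} [Fintype Ω] (μ ν : PMF Ω) : ℝ :=
  (1 / 2) * ∑ a, |(μ a).toReal - (ν a).toReal|

/-- The probability of the event `E` under the distribution `μ`. -/
noncomputable def probEvent {α : Type*} [Fintype α] (μ : PMF α) (E : α → Prop) : ℝ :=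
  ∑ a, if E a then (μ a).toReal else 0

lemma pmf_sum_toReal {α : Type*} [Fintype α] (p : PMF α) : ∑ a, (p a).toReal = 1 := by
  rw [← ENNReal.toReal_sum (fun a _ => PMF.apply_ne_top p a), ← tsum_fintype (L := .unconditional _), p.tsum_coe,
    ENNReal.toReal_one]

/-- Marginals of the iterated coupling. -/
lemma steps_marginal_fst {Ω : Type*} (M : Ω → PMF Ω) (C : Ω × Ω → PMF (Ω × Ω))
    (hC : ∀ x y : Ω, (C (x, y)).map Prod.fst = M x) :
    ∀ t (z : Ω × Ω), (stepsPMF C t z).map Prod.fst = stepsPMF M t z.1 := by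
  intro t
  induction t with
  | zero => intro z; simp [stepsPMF, PMF.pure_map]
  | succ t ih =>
    rintro ⟨x, y⟩
    show ((C (x, y)).bind (stepsPMF C t)).map Prod.fst
        = (M x).bind (stepsPMF M t)
    calc ((C (x, y)).bind (stepsPMF C t)).map Prod.fst
        = (C (x, y)).bind (fun a => (stepsPMF C t a).map Prod.fst) := PMF.map_bind _ _ _
      _ = (C (x, y)).bind ((stepsPMF M t) ∘ Prod.fst) := by
          congr 1; funext a; exact ih a
      _ = ((C (x, y)).map Prod.fst).bind (stepsPMF M t) := (PMF.bind_map _ _ _).symm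
      _ = (M x).bind (stepsPMF M t) := by rw [hC]

lemma steps_marginal_snd {Ω : Type*} (M : Ω → PMF Ω) (C : Ω × Ω → PMF (Ω × Ω))
    (hC : ∀ x y : Ω, (C (x, y)).map Prod.snd = M y) :
    ∀ t (z : Ω × Ω), (stepsPMF C t z).map Prod.snd = stepsPMF M t z.2 := by
  intro t
  induction t with
  | zero => intro z; simp [stepsPMF, PMF.pure_map]
  | succ t ih =>
    rintro ⟨x, y⟩
    show ((C (x, y)).bind (stepsPMF C t)).map Prod.snd
        = (M y).bind (stepsPMF M t)
    calc ((C (x, y)).bind (stepsPMF C t)).map Prod.snd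
        = (C (x, y)).bind (fun a => (stepsPMF C t a).map Prod.snd) := PMF.map_bind _ _ _
      _ = (C (x, y)).bind ((stepsPMF M t) ∘ Prod.snd) := by
          congr 1; funext a; exact ih a
      _ = ((C (x, y)).map Prod.snd).bind (stepsPMF M t) := (PMF.bind_map _ _ _).symm
      _ = (M y).bind (stepsPMF M t) := by rw [hC]

/-- Stationarity is preserved by iteration. -/
lemma steps_stationary {Ω : Type*} (M : Ω → PMF Ω) (π : PMF Ω) (hπ : π.bind M = π) :
    ∀ t, π.bind (stepsPMF M t) = π := by
  intro t
  induction t with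
  | zero => simp [stepsPMF]
  | succ t ih =>
    show π.bind (fun x => (M x).bind (stepsPMF M t)) = π
    rw [← PMF.bind_bind, hπ, ih]

/-- A coupling bounds total variation by one minus the diagonal probability. -/
lemma tv_le_coupling {α : Type*} [Fintype α] (γ : PMF (α × α)) (μ ν : PMF α)
    (h1 : γ.map Prod.fst = μ) (h2 : γ.map Prod.snd = ν) :
    tvDist μ ν ≤ 1 - probEvent γ (fun z => z.1 = z.2) := by
  have hdiag : probEvent γ (fun z => z.1 = z.2) = ∑ a, (γ (a, a)).toReal := by
    rw [probEvent, Fintype.sum_prod_type]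
    congr 1; funext a
    simp
  have hμ : ∀ a, (γ (a, a)).toReal ≤ (μ a).toReal := by
    intro a
    apply ENNReal.toReal_mono (PMF.apply_ne_top μ a)
    rw [← h1, PMF.map_apply]
    calc γ (a, a) = (if a = (a, a).1 then γ (a, a) else 0) := by simp
      _ ≤ ∑' z : α × α, if a = z.1 then γ z else 0 :=
          ENNReal.le_tsum (a, a)
  have hν : ∀ a, (γ (a, a)).toReal ≤ (ν a).toReal := by
    intro a
    apply ENNReal.toReal_mono (PMF.apply_ne_top ν a)
    rw [← h2, PMF.map_apply]
    calc γ (a, a) = (if a = (a, a).2 then γ (a, a) else 0) := by simp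
      _ ≤ ∑' z : α × α, if a = z.2 then γ z else 0 :=
          ENNReal.le_tsum (a, a)
  have key : ∀ a, |(μ a).toReal - (ν a).toReal|
      ≤ (μ a).toReal + (ν a).toReal - 2 * (γ (a, a)).toReal := by
    intro a
    rw [abs_sub_le_iff]
    constructor <;> nlinarith [hμ a, hν a]
  rw [tvDist, hdiag]
  have : ∑ a, |(μ a).toReal - (ν a).toReal|
      ≤ ∑ a, ((μ a).toReal + (ν a).toReal - 2 * (γ (a, a)).toReal) :=
    Finset.sum_le_sum fun a _ => key a
  rw [Finset.sum_sub_distrib, Finset.sum_add_distrib, pmf_sum_toReal, pmf_sum_toReal,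
    ← Finset.mul_sum] at this
  linarith

lemma bind_apply_toReal {α : Type*} [Fintype α] (π : PMF α) (ν : α → PMF α) (a : α) :
    ((π.bind ν) a).toReal = ∑ y, (π y).toReal * ((ν y) a).toReal := by
  rw [PMF.bind_apply, tsum_fintype, ENNReal.toReal_sum]
  · exact Finset.sum_congr rfl fun y _ => ENNReal.toReal_mul
  · intro y _
    exact ENNReal.mul_ne_top (PMF.apply_ne_top π y) (PMF.apply_ne_top (ν y) a)

/-- Convexity of total-variation distance in its second argument. -/
lemma tv_bind_le {α : Type*} [Fintype α] (μ : PMF α) (π : PMF α) (ν : α → PMF α)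
    (c : ℝ) (h : ∀ y, tvDist μ (ν y) ≤ c) : tvDist μ (π.bind ν) ≤ c := by
  have hw : ∀ y, 0 ≤ (π y).toReal := fun y => ENNReal.toReal_nonneg
  have hsum : ∑ y, (π y).toReal = 1 := pmf_sum_toReal π
  have step : ∀ a, |(μ a).toReal - ((π.bind ν) a).toReal|
      ≤ ∑ y, (π y).toReal * |(μ a).toReal - ((ν y) a).toReal| := by
    intro a
    rw [bind_apply_toReal]
    calc |(μ a).toReal - ∑ y, (π y).toReal * ((ν y) a).toReal|
        = |∑ y, ((π y).toReal * (μ a).toReal - (π y).toReal * ((ν y) a).toReal)| := by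
          rw [Finset.sum_sub_distrib, ← Finset.sum_mul, hsum, one_mul]
      _ ≤ ∑ y, |(π y).toReal * (μ a).toReal - (π y).toReal * ((ν y) a).toReal| :=
          Finset.abs_sum_le_sum_abs _ _
      _ = ∑ y, (π y).toReal * |(μ a).toReal - ((ν y) a).toReal| := by
          refine Finset.sum_congr rfl fun y _ => ?_
          rw [← mul_sub, abs_mul, abs_of_nonneg (hw y)]
  have : tvDist μ (π.bind ν) ≤ ∑ y, (π y).toReal * tvDist μ (ν y) := by
    rw [tvDist]
    calc (1/2) * ∑ a, |(μ a).toReal - ((π.bind ν) a).toReal|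
        ≤ (1/2) * ∑ a, ∑ y, (π y).toReal * |(μ a).toReal - ((ν y) a).toReal| := by
          apply mul_le_mul_of_nonneg_left (Finset.sum_le_sum fun a _ => step a) (by norm_num)
      _ = ∑ y, (π y).toReal * tvDist μ (ν y) := by
          rw [Finset.sum_comm, Finset.mul_sum]
          refine Finset.sum_congr rfl fun y _ => ?_
          rw [tvDist, ← Finset.mul_sum]
          ring
  refine this.trans ?_
  calc ∑ y, (π y).toReal * tvDist μ (ν y) ≤ ∑ y, (π y).toReal * c :=
        Finset.sum_le_sum fun y _ => mul_le_mul_of_nonneg_left (h y) (hw y)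
    _ = c := by rw [← Finset.sum_mul, hsum, one_mul]

/-- A Markovian coupling whose `t`-step diagonal probability is at least `p` from every pair of
initial states forces the `t`-step distribution from any state to be within `1 - p` of the
stationary distribution in total variation. -/
theorem coupling_gives_mixing_bound {Ω : Type*} [Fintype Ω] [Nonempty Ω]
    (M : Ω → PMF Ω) (π : PMF Ω) (hπ : π.bind M = π)
    (C : Ω × Ω → PMF (Ω × Ω))
    (hC₁ : ∀ x y : Ω, (C (x, y)).map Prod.fst = M x)
    (hC₂ : ∀ x y : Ω, (C (x, y)).map Prod.snd = M y)
    (p : ℝ) (hp₀ : 0 ≤ p) (hp₁ : p ≤ 1) (t : ℕ) (ht : 0 < t)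
    (hcouple : ∀ x₀ y₀ : Ω,
      p ≤ probEvent (stepsPMF C t (x₀, y₀)) (fun z => z.1 = z.2)) :
    ∀ x₀ : Ω, tvDist (stepsPMF M t x₀) π ≤ 1 - p := by
  intro x₀
  have hpair : ∀ y₀ : Ω, tvDist (stepsPMF M t x₀) (stepsPMF M t y₀) ≤ 1 - p := by
    intro y₀
    have h := tv_le_coupling (stepsPMF C t (x₀, y₀)) (stepsPMF M t x₀) (stepsPMF M t y₀)
      (steps_marginal_fst M C hC₁ t (x₀, y₀)) (steps_marginal_snd M C hC₂ t (x₀, y₀))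
    linarith [hcouple x₀ y₀]
  have := tv_bind_le (stepsPMF M t x₀) π (stepsPMF M t) (1 - p) hpair
  rwa [steps_stationary M π hπ t] at this
end

section
/- Let n ≥ 2. For the random-to-top shuffle on a deck of n cards, starting from any fixed deck order: after 2 steps, the total variation distance between the distribution of the label of the second-to-top card and the uniform distribution on the n labels is at most 1/n; and after 3 steps, this total variation distance is at most 1/n². -/
open scoped Classical

/-- The random-to-top shuffle on a deck of `n` cards.  A deck order is a permutation
`σ : Equiv.Perm (Fin n)`, where `σ p` is the label of the card in position `p`
(position `0` being the top).  A uniformly random label `ℓ` is chosen and the card with that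
label is moved to the top, the cards above its former position moving down by one. -/
noncomputable def randomToTop (n : ℕ) [NeZero n] :
    Equiv.Perm (Fin n) → PMF (Equiv.Perm (Fin n)) :=
  fun σ => (PMF.uniformOfFintype (Fin n)).map (fun ℓ => σ * (Fin.cycleRange (σ⁻¹ ℓ))⁻¹)

/-! ### Auxiliary definitions and lemmas -/

/-- One move of the random-to-top shuffle, deterministically: move the card with label `ℓ`
to the top. -/
noncomputable def RTT.mv {m : ℕ} (σ : Equiv.Perm (Fin (m + 2))) (ℓ : Fin (m + 2)) :
    Equiv.Perm (Fin (m + 2)) := σ * (Fin.cycleRange (σ⁻¹ ℓ))⁻¹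

namespace RTT

lemma mv_zero {m : ℕ} (σ : Equiv.Perm (Fin (m + 2))) (ℓ : Fin (m + 2)) : mv σ ℓ 0 = ℓ := by
  have h : (Fin.cycleRange (σ⁻¹ ℓ))⁻¹ (0 : Fin (m + 2)) = σ⁻¹ ℓ := by
    show (Fin.cycleRange (σ⁻¹ ℓ)).symm 0 = σ⁻¹ ℓ
    exact Fin.cycleRange_symm_zero _
  simp [mv, Equiv.Perm.mul_apply, h]

lemma cycleRange_symm_one {m : ℕ} (j : Fin (m + 2)) (h : j ≠ 0) :
    (Fin.cycleRange j).symm 1 = 0 := by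
  rw [Equiv.symm_apply_eq]
  have hj : (0 : Fin (m + 2)) < j := Fin.pos_of_ne_zero h
  rw [Fin.cycleRange_of_lt hj, zero_add]

lemma mv_one {m : ℕ} (σ : Equiv.Perm (Fin (m + 2))) (ℓ : Fin (m + 2)) :
    mv σ ℓ 1 = if ℓ = σ 0 then σ 1 else σ 0 := by
  by_cases h : ℓ = σ 0
  · have hj : σ⁻¹ ℓ = 0 := by rw [h]; simp
    simp [mv, Equiv.Perm.mul_apply, hj, h]
  · have hj : σ⁻¹ ℓ ≠ 0 := by
      intro hh
      exact h (by rw [← Equiv.apply_symm_apply σ ℓ]; exact congrArg σ hh)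
    have h1 : (Fin.cycleRange (σ⁻¹ ℓ))⁻¹ (1 : Fin (m + 2)) = 0 := cycleRange_symm_one _ hj
    simp [mv, Equiv.Perm.mul_apply, h1, h, cycleRange_symm_one (σ.symm ℓ) hj]

lemma hM {m : ℕ} (σ : Equiv.Perm (Fin (m + 2))) :
    randomToTop (m + 2) σ = (PMF.uniformOfFintype (Fin (m + 2))).map (mv σ) := rfl

lemma steps2_map {m : ℕ} (σ₀ : Equiv.Perm (Fin (m + 2))) :
    (stepsPMF (randomToTop (m + 2)) 2 σ₀).map (fun σ => σ 1)
      = (PMF.uniformOfFintype (Fin (m + 2))).bind (fun ℓ₁ =>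
          (PMF.uniformOfFintype (Fin (m + 2))).map (fun ℓ₂ =>
            if ℓ₂ = ℓ₁ then (if ℓ₁ = σ₀ 0 then σ₀ 1 else σ₀ 0) else ℓ₁)) := by
  have h2 : stepsPMF (randomToTop (m + 2)) 2 σ₀
      = (randomToTop (m + 2) σ₀).bind (randomToTop (m + 2)) := by
    show ((randomToTop (m + 2) σ₀).bind fun σ =>
        (randomToTop (m + 2) σ).bind (stepsPMF _ 0)) = _
    have h0 : stepsPMF (randomToTop (m + 2)) 0 = PMF.pure := rfl
    simp [h0, PMF.bind_pure]
  rw [h2, PMF.map_bind]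
  simp only [hM, PMF.map_comp, PMF.bind_map]
  congr 1
  funext ℓ₁
  refine congrArg (fun f => PMF.map f (PMF.uniformOfFintype (Fin (m + 2)))) ?_
  funext ℓ₂
  show mv (mv σ₀ ℓ₁) ℓ₂ 1 = _
  rw [mv_one, mv_zero, mv_one]

lemma steps3_map {m : ℕ} (σ₀ : Equiv.Perm (Fin (m + 2))) :
    (stepsPMF (randomToTop (m + 2)) 3 σ₀).map (fun σ => σ 1)
      = (PMF.uniformOfFintype (Fin (m + 2))).bind (fun ℓ₁ =>
          (PMF.uniformOfFintype (Fin (m + 2))).bind (fun ℓ₂ =>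
            (PMF.uniformOfFintype (Fin (m + 2))).map (fun ℓ₃ =>
              if ℓ₃ = ℓ₂ then
                (if ℓ₂ = ℓ₁ then (if ℓ₁ = σ₀ 0 then σ₀ 1 else σ₀ 0) else ℓ₁)
              else ℓ₂))) := by
  have h3 : stepsPMF (randomToTop (m + 2)) 3 σ₀
      = (randomToTop (m + 2) σ₀).bind (fun σ₁ =>
          (randomToTop (m + 2) σ₁).bind (randomToTop (m + 2))) := by
    show ((randomToTop (m + 2) σ₀).bind fun σ₁ =>
        (randomToTop (m + 2) σ₁).bind fun σ₂ =>
          (randomToTop (m + 2) σ₂).bind (stepsPMF _ 0)) = _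
    have h0 : stepsPMF (randomToTop (m + 2)) 0 = PMF.pure := rfl
    simp [h0, PMF.bind_pure]
  rw [h3, PMF.map_bind]
  simp only [PMF.map_bind, hM, PMF.map_comp, PMF.bind_map]
  congr 1
  funext ℓ₁
  simp only [Function.comp]
  congr 1
  funext ℓ₂
  rw [hM, PMF.map_comp]
  refine congrArg (fun f => PMF.map f (PMF.uniformOfFintype (Fin (m + 2)))) ?_
  funext ℓ₃
  show mv (mv (mv σ₀ ℓ₁) ℓ₂) ℓ₃ 1 = _
  rw [mv_one, mv_zero, mv_one, mv_zero, mv_one]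

lemma sum_ite_pick {m : ℕ} (u : ENNReal) (a b c d : Fin (m + 2)) :
    ∑ x : Fin (m + 2), (if a = (if x = b then c else d) then u else 0)
      = (m + 1 : ℕ) * (if a = d then u else 0) + (if a = c then u else 0) := by
  have h1 : ∑ x ∈ Finset.univ \ {b}, (if a = (if x = b then c else d) then u else 0)
      = (m + 1 : ℕ) * (if a = d then u else 0) := by
    rw [Finset.sum_congr rfl (fun x hx => by
      have hxb : x ≠ b := by simpa using (Finset.mem_sdiff.mp hx).2
      rw [if_neg hxb]), Finset.sum_const, Finset.card_sdiff_of_subset (Finset.subset_univ _)]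
    simp [nsmul_eq_mul, Finset.card_univ]
  have h2 : ∑ x ∈ ({b} : Finset (Fin (m + 2))),
      (if a = (if x = b then c else d) then u else 0) = (if a = c then u else 0) := by
    rw [Finset.sum_singleton, if_pos rfl]
  rw [← Finset.sum_sdiff (Finset.subset_univ {b}), h1, h2]

lemma X2_apply {m : ℕ} (σ₀ : Equiv.Perm (Fin (m + 2))) (hz : σ₀ 0 ≠ σ₀ 1) (a : Fin (m + 2)) :
    ((PMF.uniformOfFintype (Fin (m + 2))).bind (fun ℓ₁ =>
        (PMF.uniformOfFintype (Fin (m + 2))).map (fun ℓ₂ =>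
          if ℓ₂ = ℓ₁ then (if ℓ₁ = σ₀ 0 then σ₀ 1 else σ₀ 0) else ℓ₁))) a
      = (((m + 1) + (if a = σ₀ 1 then 1 else 0)
          + (m + 1) * (if a = σ₀ 0 then 1 else 0) : ℕ) : ENNReal)
          * (((m + 2 : ℕ) : ENNReal))⁻¹ ^ 2 := by
  rw [PMF.bind_apply, tsum_fintype]
  simp only [PMF.map_apply, tsum_fintype, PMF.uniformOfFintype_apply, Fintype.card_fin]
  rw [Finset.sum_congr rfl (fun ℓ₁ _ => by rw [sum_ite_pick])]
  simp only [mul_add, Finset.sum_add_distrib, ← Finset.mul_sum]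
  rw [sum_ite_pick, Finset.sum_ite_eq, if_pos (Finset.mem_univ a)]
  have hz' : σ₀ 1 ≠ σ₀ 0 := fun h => hz h.symm
  by_cases h1 : a = σ₀ 1 <;> by_cases h0 : a = σ₀ 0
  · exact absurd (h0.symm.trans h1) hz
  all_goals simp [h1, h0, hz, hz']
  all_goals ring

lemma X3_apply {m : ℕ} (σ₀ : Equiv.Perm (Fin (m + 2))) (hz : σ₀ 0 ≠ σ₀ 1) (a : Fin (m + 2)) :
    ((PMF.uniformOfFintype (Fin (m + 2))).bind (fun ℓ₁ =>
        (PMF.uniformOfFintype (Fin (m + 2))).bind (fun ℓ₂ =>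
          (PMF.uniformOfFintype (Fin (m + 2))).map (fun ℓ₃ =>
            if ℓ₃ = ℓ₂ then
              (if ℓ₂ = ℓ₁ then (if ℓ₁ = σ₀ 0 then σ₀ 1 else σ₀ 0) else ℓ₁)
            else ℓ₂)))) a
      = ((((m + 1) * (m + 2) + (m + 1)) + (if a = σ₀ 1 then 1 else 0)
          + (m + 1) * (if a = σ₀ 0 then 1 else 0) : ℕ) : ENNReal)
          * (((m + 2 : ℕ) : ENNReal))⁻¹ ^ 3 := by
  rw [PMF.bind_apply, tsum_fintype]
  simp only [PMF.bind_apply, PMF.map_apply, tsum_fintype, PMF.uniformOfFintype_apply,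
    Fintype.card_fin]
  simp only [sum_ite_pick, mul_add, Finset.sum_add_distrib, ← Finset.mul_sum,
    Finset.sum_ite_eq, Finset.mem_univ, if_true, Finset.sum_const, Finset.card_univ,
    Fintype.card_fin, nsmul_eq_mul]
  have hz' : σ₀ 1 ≠ σ₀ 0 := fun h => hz h.symm
  by_cases h1 : a = σ₀ 1 <;> by_cases h0 : a = σ₀ 0
  · exact absurd (h0.symm.trans h1) hz
  all_goals simp [h1, h0, hz, hz']
  all_goals ring

end RTT

/-- After two random-to-top shuffles the label of the second-to-top card is within `1/n` of
uniform in total variation, and after three steps it is within `1/n²`. -/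
theorem randomToTop_second_card (n : ℕ) [NeZero n] (hn : 2 ≤ n)
    (σ₀ : Equiv.Perm (Fin n)) :
    tvDist ((stepsPMF (randomToTop n) 2 σ₀).map (fun σ => σ 1))
        (PMF.uniformOfFintype (Fin n)) ≤ 1 / (n : ℝ)
    ∧ tvDist ((stepsPMF (randomToTop n) 3 σ₀).map (fun σ => σ 1))
        (PMF.uniformOfFintype (Fin n)) ≤ 1 / (n : ℝ) ^ 2 := by
  obtain ⟨m, rfl⟩ : ∃ m, n = m + 2 := ⟨n - 2, by omega⟩
  have h01 : (0 : Fin (m + 2)) ≠ 1 := by simp [Fin.ext_iff]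
  have hz : σ₀ 0 ≠ σ₀ 1 := fun h => h01 (σ₀.injective h)
  set r : ℝ := (((m + 2 : ℕ) : ℝ))⁻¹ with hrdef
  have hone : ((m : ℝ) + 2) * r = 1 := by
    rw [hrdef]; push_cast; exact mul_inv_cancel₀ (by positivity)
  have hr0 : (0 : ℝ) ≤ r := by rw [hrdef]; positivity
  have hu : ∀ a : Fin (m + 2), ((PMF.uniformOfFintype (Fin (m + 2))) a).toReal = r := by
    intro a
    rw [PMF.uniformOfFintype_apply, Fintype.card_fin, ENNReal.toReal_inv,
      ENNReal.toReal_natCast, hrdef]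
  -- the real values of the two distributions
  have ht2 : ∀ a : Fin (m + 2),
      (((stepsPMF (randomToTop (m + 2)) 2 σ₀).map (fun σ => σ 1)) a).toReal
      = (((m + 1) + (if a = σ₀ 1 then 1 else 0)
          + (m + 1) * (if a = σ₀ 0 then 1 else 0) : ℕ) : ℝ) * r ^ 2 := by
    intro a
    rw [RTT.steps2_map, RTT.X2_apply σ₀ hz a, ENNReal.toReal_mul, ENNReal.toReal_pow,
      ENNReal.toReal_inv, ENNReal.toReal_natCast, ENNReal.toReal_natCast, hrdef]
  have ht3 : ∀ a : Fin (m + 2),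
      (((stepsPMF (randomToTop (m + 2)) 3 σ₀).map (fun σ => σ 1)) a).toReal
      = ((((m + 1) * (m + 2) + (m + 1)) + (if a = σ₀ 1 then 1 else 0)
          + (m + 1) * (if a = σ₀ 0 then 1 else 0) : ℕ) : ℝ) * r ^ 3 := by
    intro a
    rw [RTT.steps3_map, RTT.X3_apply σ₀ hz a, ENNReal.toReal_mul, ENNReal.toReal_pow,
      ENNReal.toReal_inv, ENNReal.toReal_natCast, ENNReal.toReal_natCast, hrdef]
  have hcard : (Finset.univ \ ({σ₀ 0, σ₀ 1} : Finset (Fin (m + 2)))).card = m := by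
    rw [Finset.card_sdiff_of_subset (Finset.subset_univ _), Finset.card_pair hz, Finset.card_univ,
      Fintype.card_fin]
    omega
  constructor
  · -- two steps
    have hsum : ∑ a : Fin (m + 2),
        |(((stepsPMF (randomToTop (m + 2)) 2 σ₀).map (fun σ => σ 1)) a).toReal
          - ((PMF.uniformOfFintype (Fin (m + 2))) a).toReal| = 2 * ((m : ℝ) * r ^ 2) := by
      rw [Finset.sum_congr rfl (fun a _ => by rw [ht2 a, hu a])]
      rw [← Finset.sum_sdiff (Finset.subset_univ ({σ₀ 0, σ₀ 1} : Finset (Fin (m + 2))))]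
      have hA : ∑ a ∈ Finset.univ \ ({σ₀ 0, σ₀ 1} : Finset (Fin (m + 2))),
          |(((m + 1) + (if a = σ₀ 1 then 1 else 0)
            + (m + 1) * (if a = σ₀ 0 then 1 else 0) : ℕ) : ℝ) * r ^ 2 - r|
          = (m : ℝ) * r ^ 2 := by
        rw [Finset.sum_congr rfl (fun a ha => ?_), Finset.sum_const, hcard, nsmul_eq_mul]
        have hmem := Finset.mem_sdiff.mp ha
        have h0 : a ≠ σ₀ 0 := fun h => hmem.2 (by simp [h])
        have h1 : a ≠ σ₀ 1 := fun h => hmem.2 (by simp [h])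
        rw [if_neg h1, if_neg h0, abs_eq (sq_nonneg r)]
        right; push_cast; linear_combination r * hone
      have hB : ∑ a ∈ ({σ₀ 0, σ₀ 1} : Finset (Fin (m + 2))),
          |(((m + 1) + (if a = σ₀ 1 then 1 else 0)
            + (m + 1) * (if a = σ₀ 0 then 1 else 0) : ℕ) : ℝ) * r ^ 2 - r|
          = (m : ℝ) * r ^ 2 := by
        rw [Finset.sum_pair hz]
        have e0 : |(((m + 1) + (if σ₀ 0 = σ₀ 1 then 1 else 0)
            + (m + 1) * (if σ₀ 0 = σ₀ 0 then 1 else 0) : ℕ) : ℝ) * r ^ 2 - r|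
            = (m : ℝ) * r ^ 2 := by
          rw [if_neg hz, if_pos rfl, abs_eq (by positivity)]
          left; push_cast; linear_combination r * hone
        have e1 : |(((m + 1) + (if σ₀ 1 = σ₀ 1 then 1 else 0)
            + (m + 1) * (if σ₀ 1 = σ₀ 0 then 1 else 0) : ℕ) : ℝ) * r ^ 2 - r|
            = 0 := by
          rw [if_pos rfl, if_neg (fun h => hz h.symm), abs_eq le_rfl]
          left; push_cast; linear_combination r * hone
        rw [e0, e1]; ring
      rw [hA, hB]; ring
    show (1 / 2 : ℝ) * _ ≤ _
    rw [hsum]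
    have key : (m : ℝ) * r ^ 2 + 2 * r ^ 2 = r := by linear_combination r * hone
    have hr2 : (0 : ℝ) ≤ r ^ 2 := sq_nonneg r
    have : (1 / (((m : ℕ) + 2 : ℕ) : ℝ)) = r := by rw [hrdef]; push_cast; rw [one_div]
    rw [this]
    nlinarith
  · -- three steps
    have hsum : ∑ a : Fin (m + 2),
        |(((stepsPMF (randomToTop (m + 2)) 3 σ₀).map (fun σ => σ 1)) a).toReal
          - ((PMF.uniformOfFintype (Fin (m + 2))) a).toReal| = 2 * ((m : ℝ) * r ^ 3) := by
      rw [Finset.sum_congr rfl (fun a _ => by rw [ht3 a, hu a])]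
      rw [← Finset.sum_sdiff (Finset.subset_univ ({σ₀ 0, σ₀ 1} : Finset (Fin (m + 2))))]
      have hA : ∑ a ∈ Finset.univ \ ({σ₀ 0, σ₀ 1} : Finset (Fin (m + 2))),
          |((((m + 1) * (m + 2) + (m + 1)) + (if a = σ₀ 1 then 1 else 0)
            + (m + 1) * (if a = σ₀ 0 then 1 else 0) : ℕ) : ℝ) * r ^ 3 - r|
          = (m : ℝ) * r ^ 3 := by
        rw [Finset.sum_congr rfl (fun a ha => ?_), Finset.sum_const, hcard, nsmul_eq_mul]
        have hmem := Finset.mem_sdiff.mp ha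
        have h0 : a ≠ σ₀ 0 := fun h => hmem.2 (by simp [h])
        have h1 : a ≠ σ₀ 1 := fun h => hmem.2 (by simp [h])
        rw [if_neg h1, if_neg h0, abs_eq (by positivity : (0:ℝ) ≤ r ^ 3)]
        right; push_cast; linear_combination (r * (((m : ℝ) + 2) * r + 1)) * hone
      have hB : ∑ a ∈ ({σ₀ 0, σ₀ 1} : Finset (Fin (m + 2))),
          |((((m + 1) * (m + 2) + (m + 1)) + (if a = σ₀ 1 then 1 else 0)
            + (m + 1) * (if a = σ₀ 0 then 1 else 0) : ℕ) : ℝ) * r ^ 3 - r|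
          = (m : ℝ) * r ^ 3 := by
        rw [Finset.sum_pair hz]
        have e0 : |((((m + 1) * (m + 2) + (m + 1)) + (if σ₀ 0 = σ₀ 1 then 1 else 0)
            + (m + 1) * (if σ₀ 0 = σ₀ 0 then 1 else 0) : ℕ) : ℝ) * r ^ 3 - r|
            = (m : ℝ) * r ^ 3 := by
          rw [if_neg hz, if_pos rfl, abs_eq (by positivity)]
          left; push_cast; linear_combination (r * (((m : ℝ) + 2) * r + 1)) * hone
        have e1 : |((((m + 1) * (m + 2) + (m + 1)) + (if σ₀ 1 = σ₀ 1 then 1 else 0)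
            + (m + 1) * (if σ₀ 1 = σ₀ 0 then 1 else 0) : ℕ) : ℝ) * r ^ 3 - r|
            = 0 := by
          rw [if_pos rfl, if_neg (fun h => hz h.symm), abs_eq le_rfl]
          left; push_cast; linear_combination (r * (((m : ℝ) + 2) * r + 1)) * hone
        rw [e0, e1]; ring
      rw [hA, hB]; ring
    show (1 / 2 : ℝ) * _ ≤ _
    rw [hsum]
    have key : (m : ℝ) * r ^ 3 + 2 * r ^ 3 = r ^ 2 := by
      linear_combination (r ^ 2) * hone
    have hr3 : (0 : ℝ) ≤ r ^ 3 := by positivity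
    have : (1 / (((m : ℕ) + 2 : ℕ) : ℝ) ^ 2) = r ^ 2 := by
      rw [hrdef]; push_cast; rw [one_div, inv_pow]
    rw [this]
    nlinarith
end

section
/- Let n ≥ 1 and fix a card label c. For the random-to-top shuffle on a deck of n cards, starting from any fixed deck order, after t steps the total variation distance between the distribution of the position of the card labelled c and the uniform distribution on the n positions is at most (1 − 1/n)^t. -/
open scoped Classical

/-! Auxiliary material. -/

/-- The position chain of a single card under random-to-top. -/
noncomputable def posKer (n : ℕ) [NeZero n] : Fin n → PMF (Fin n) :=
  fun p => (PMF.uniformOfFintype (Fin n)).map (fun ℓ => Fin.cycleRange ℓ p)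

lemma stepsPMF_succ' {Ω : Type*} (M : Ω → PMF Ω) (t : ℕ) (x : Ω) :
    stepsPMF M (t + 1) x = (stepsPMF M t x).bind M := by
  induction t generalizing x with
  | zero => simp [stepsPMF, PMF.bind_pure, PMF.pure_bind]
  | succ t ih =>
    show (M x).bind (stepsPMF M (t + 1)) = ((M x).bind (stepsPMF M t)).bind M
    rw [PMF.bind_bind]
    exact congrArg _ (funext fun y => ih y)

lemma map_proj (n : ℕ) [NeZero n] (c : Fin n) (σ : Equiv.Perm (Fin n)) :
    (randomToTop n σ).map (fun τ => τ⁻¹ c) = posKer n (σ⁻¹ c) := by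
  rw [randomToTop, posKer, PMF.map_comp]
  ext q
  rw [PMF.map_apply, PMF.map_apply]
  have h : ∀ a : Fin n, ((fun τ : Equiv.Perm (Fin n) => τ⁻¹ c) ∘
      fun ℓ => σ * (Fin.cycleRange (σ⁻¹ ℓ))⁻¹) a = Fin.cycleRange (σ⁻¹ a) (σ⁻¹ c) := by
    intro a; simp only [Function.comp_apply, mul_inv_rev, inv_inv, Equiv.Perm.mul_apply]
  simp only [h, PMF.uniformOfFintype_apply]
  exact Equiv.tsum_eq σ.symm
    (fun m => if q = Fin.cycleRange m (σ⁻¹ c) then ((Fintype.card (Fin n) : ENNReal))⁻¹ else 0)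

lemma steps_proj (n : ℕ) [NeZero n] (c : Fin n) (t : ℕ) (σ : Equiv.Perm (Fin n)) :
    (stepsPMF (randomToTop n) t σ).map (fun τ => τ⁻¹ c)
      = stepsPMF (posKer n) t (σ⁻¹ c) := by
  induction t generalizing σ with
  | zero => simp [stepsPMF, PMF.pure_map]
  | succ t ih =>
    show ((randomToTop n σ).bind (stepsPMF (randomToTop n) t)).map (fun τ => τ⁻¹ c)
        = (posKer n (σ⁻¹ c)).bind (stepsPMF (posKer n) t)
    rw [PMF.map_bind, ← map_proj n c σ, PMF.bind_map]
    congr 1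
    funext τ
    exact ih τ

lemma pmf_toReal_sum_one {Ω : Type*} [Fintype Ω] (μ : PMF Ω) :
    ∑ a, (μ a).toReal = 1 := by
  rw [← ENNReal.toReal_sum (fun a _ => PMF.apply_ne_top μ a), ← tsum_fintype (L := .unconditional _),
    PMF.tsum_coe, ENNReal.toReal_one]

lemma tvDist_le_one {Ω : Type*} [Fintype Ω] (μ ν : PMF Ω) : tvDist μ ν ≤ 1 := by
  rw [tvDist]
  have h : ∑ a, |(μ a).toReal - (ν a).toReal| ≤ ∑ a, ((μ a).toReal + (ν a).toReal) := by
    refine Finset.sum_le_sum fun a _ => ?_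
    have := abs_sub (μ a).toReal (ν a).toReal
    calc |(μ a).toReal - (ν a).toReal| ≤ |(μ a).toReal| + |(ν a).toReal| := abs_sub _ _
      _ = (μ a).toReal + (ν a).toReal := by
          rw [abs_of_nonneg ENNReal.toReal_nonneg, abs_of_nonneg ENNReal.toReal_nonneg]
  rw [Finset.sum_add_distrib, pmf_toReal_sum_one, pmf_toReal_sum_one] at h
  linarith

section Contraction

variable (m : ℕ)

/-- The real transition matrix of the position chain. -/
noncomputable def rker (p q : Fin (m + 1)) : ℝ := ((posKer (m + 1) p) q).toReal

lemma uniform_toReal (q : Fin (m + 1)) :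
    ((PMF.uniformOfFintype (Fin (m + 1))) q).toReal = 1 / ((m : ℝ) + 1) := by
  rw [PMF.uniformOfFintype_apply, ENNReal.toReal_inv, one_div]
  congr 1
  rw [Fintype.card_fin, ENNReal.toReal_natCast]
  push_cast; ring

lemma rker_eq (p q : Fin (m + 1)) :
    rker m p q = ∑ ℓ, (if q = Fin.cycleRange ℓ p then (1 : ℝ) / (m + 1) else 0) := by
  rw [rker, posKer, PMF.map_apply, tsum_fintype,
    ENNReal.toReal_sum (fun ℓ _ => by split <;> simp [PMF.apply_ne_top])]
  refine Finset.sum_congr rfl fun ℓ _ => ?_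
  split
  · exact uniform_toReal m ℓ
  · simp

lemma rker_nonneg (p q : Fin (m + 1)) : 0 ≤ rker m p q := by
  rw [rker_eq]
  refine Finset.sum_nonneg fun ℓ _ => ?_
  split <;> positivity

lemma rker_zero (p : Fin (m + 1)) : rker m p 0 = 1 / (m + 1) := by
  rw [rker_eq]
  have hcond : ∀ ℓ : Fin (m + 1), ((0 : Fin (m + 1)) = Fin.cycleRange ℓ p) ↔ ℓ = p := by
    intro ℓ
    constructor
    · intro h
      have : Fin.cycleRange ℓ p = Fin.cycleRange ℓ ℓ := by
        rw [Fin.cycleRange_self, ← h]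
      exact ((Equiv.injective _ this)).symm
    · rintro rfl
      rw [Fin.cycleRange_self]
  simp only [hcond]
  rw [Finset.sum_ite_eq' Finset.univ p (fun _ => (1 : ℝ) / (m + 1))]
  simp

lemma rker_row_sum (p : Fin (m + 1)) : ∑ q, rker m p q = 1 := by
  simp only [rker_eq]
  rw [Finset.sum_comm]
  have : ∀ ℓ : Fin (m + 1),
      ∑ q, (if q = Fin.cycleRange ℓ p then (1 : ℝ) / (m + 1) else 0) = 1 / (m + 1) := by
    intro ℓ
    rw [Finset.sum_ite_eq' Finset.univ (Fin.cycleRange ℓ p) (fun _ => (1 : ℝ) / (m + 1))]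
    simp
  rw [Finset.sum_congr rfl (fun ℓ _ => this ℓ)]
  rw [Finset.sum_const, Finset.card_univ, Fintype.card_fin]
  rw [nsmul_eq_mul]; push_cast
  field_simp

lemma rker_col_sum (q : Fin (m + 1)) : ∑ p, rker m p q = 1 := by
  simp only [rker_eq]
  rw [Finset.sum_comm]
  have : ∀ ℓ : Fin (m + 1),
      ∑ p, (if q = Fin.cycleRange ℓ p then (1 : ℝ) / (m + 1) else 0) = 1 / (m + 1) := by
    intro ℓ
    have hcond : ∀ p : Fin (m + 1),
        (q = Fin.cycleRange ℓ p) ↔ p = (Fin.cycleRange ℓ)⁻¹ q := by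
      intro p
      constructor
      · intro h; rw [h]; simp
      · rintro rfl; simp
    simp only [hcond]
    rw [Finset.sum_ite_eq' Finset.univ ((Fin.cycleRange ℓ)⁻¹ q) (fun _ => (1 : ℝ) / (m + 1))]
    simp
  rw [Finset.sum_congr rfl (fun ℓ _ => this ℓ)]
  rw [Finset.sum_const, Finset.card_univ, Fintype.card_fin]
  rw [nsmul_eq_mul]; push_cast
  field_simp

lemma bind_posKer_toReal (μ : PMF (Fin (m + 1))) (q : Fin (m + 1)) :
    ((μ.bind (posKer (m + 1))) q).toReal = ∑ p, (μ p).toReal * rker m p q := by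
  rw [PMF.bind_apply, tsum_fintype,
    ENNReal.toReal_sum (fun p _ => ENNReal.mul_ne_top (PMF.apply_ne_top _ _)
      (PMF.apply_ne_top _ _))]
  exact Finset.sum_congr rfl fun p _ => ENNReal.toReal_mul

lemma contract (μ : PMF (Fin (m + 1))) :
    tvDist (μ.bind (posKer (m + 1))) (PMF.uniformOfFintype (Fin (m + 1)))
      ≤ (1 - 1 / (m + 1 : ℝ)) * tvDist μ (PMF.uniformOfFintype (Fin (m + 1))) := by
  set u : ℝ := 1 / (m + 1 : ℝ) with hu
  have hu0 : 0 < u := by positivity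
  -- signed difference of μ from uniform
  set d : Fin (m + 1) → ℝ := fun p => (μ p).toReal - u with hd
  have hdsum : ∑ p, d p = 0 := by
    rw [hd]
    simp only
    rw [Finset.sum_sub_distrib, pmf_toReal_sum_one]
    rw [Finset.sum_const, Finset.card_univ, Fintype.card_fin, hu]
    have h0 : (m + 1 : ℝ) ≠ 0 := by positivity
    rw [nsmul_eq_mul]; push_cast
    field_simp
    ring
  -- shifted kernel
  set s : Fin (m + 1) → Fin (m + 1) → ℝ :=
    fun p q => rker m p q - (if q = 0 then u else 0) with hs
  have hs_nonneg : ∀ p q, 0 ≤ s p q := by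
    intro p q
    rw [hs]
    simp only
    split
    · next h => rw [h, rker_zero]; simp [hu]
    · simpa using rker_nonneg m p q
  have hs_row : ∀ p, ∑ q, s p q = 1 - u := by
    intro p
    rw [hs]
    simp only
    rw [Finset.sum_sub_distrib, rker_row_sum]
    rw [Finset.sum_ite_eq' Finset.univ (0 : Fin (m + 1)) (fun _ => u)]
    simp
  -- pointwise identity for the difference
  have hdiff : ∀ q, ((μ.bind (posKer (m + 1))) q).toReal
      - ((PMF.uniformOfFintype (Fin (m + 1))) q).toReal = ∑ p, d p * s p q := by
    intro q
    rw [bind_posKer_toReal, uniform_toReal]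
    have h2 : ∑ p, d p * rker m p q = ∑ p, d p * s p q := by
      rw [hs]
      simp only [mul_sub]
      rw [Finset.sum_sub_distrib]
      have : ∑ p, d p * (if q = 0 then u else 0) = 0 := by
        rw [← Finset.sum_mul, hdsum, zero_mul]
      rw [this, sub_zero]
    have h1 : ∑ p, d p * rker m p q = ∑ p, (μ p).toReal * rker m p q - u := by
      have hsplit : ∑ p, d p * rker m p q
          = ∑ p, (μ p).toReal * rker m p q - ∑ p, u * rker m p q := by
        rw [← Finset.sum_sub_distrib]
        refine Finset.sum_congr rfl fun p _ => ?_
        simp only [hd]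
        ring
      rw [hsplit, ← Finset.mul_sum, rker_col_sum, mul_one]
    rw [← hu, ← h2, h1]
  -- the total variation estimate
  rw [tvDist, tvDist]
  have hbound : ∑ q, |((μ.bind (posKer (m + 1))) q).toReal
      - ((PMF.uniformOfFintype (Fin (m + 1))) q).toReal|
      ≤ (1 - u) * ∑ p, |(μ p).toReal - ((PMF.uniformOfFintype (Fin (m + 1))) p).toReal| := by
    calc ∑ q, |((μ.bind (posKer (m + 1))) q).toReal
          - ((PMF.uniformOfFintype (Fin (m + 1))) q).toReal|
        = ∑ q, |∑ p, d p * s p q| := by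
          exact Finset.sum_congr rfl fun q _ => by rw [hdiff q]
      _ ≤ ∑ q, ∑ p, |d p| * s p q := by
          refine Finset.sum_le_sum fun q _ => ?_
          calc |∑ p, d p * s p q| ≤ ∑ p, |d p * s p q| := Finset.abs_sum_le_sum_abs _ _
            _ = ∑ p, |d p| * s p q := Finset.sum_congr rfl fun p _ => by
                rw [abs_mul, abs_of_nonneg (hs_nonneg p q)]
      _ = ∑ p, |d p| * ∑ q, s p q := by
          rw [Finset.sum_comm]
          exact Finset.sum_congr rfl fun p _ => by rw [Finset.mul_sum]
      _ = (1 - u) * ∑ p, |d p| := by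
          rw [Finset.mul_sum]
          exact Finset.sum_congr rfl fun p _ => by rw [hs_row p]; ring
      _ = (1 - u) * ∑ p, |(μ p).toReal
            - ((PMF.uniformOfFintype (Fin (m + 1))) p).toReal| := by
          congr 1
          refine Finset.sum_congr rfl fun p _ => ?_
          simp only [hd]
          rw [uniform_toReal, hu]
  linarith

end Contraction

/-- After `t` random-to-top shuffles from any starting order, the position of the card with
label `c` is within `(1 - 1/n)^t` of uniform in total variation. -/
theorem randomToTop_position_of_card (n : ℕ) [NeZero n] (hn : 1 ≤ n) (c : Fin n)
    (σ₀ : Equiv.Perm (Fin n)) (t : ℕ) :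
    tvDist ((stepsPMF (randomToTop n) t σ₀).map (fun σ => σ⁻¹ c))
      (PMF.uniformOfFintype (Fin n)) ≤ (1 - 1 / (n : ℝ)) ^ t := by
  obtain ⟨m, rfl⟩ : ∃ m, n = m + 1 :=
    ⟨n - 1, (Nat.succ_pred_eq_of_pos (Nat.pos_of_ne_zero (NeZero.ne n))).symm⟩
  rw [steps_proj]
  have hcast : ((m + 1 : ℕ) : ℝ) = (m + 1 : ℝ) := by push_cast; ring
  rw [hcast]
  have hfac : (0 : ℝ) ≤ 1 - 1 / (m + 1 : ℝ) := by
    have h1 : (1 : ℝ) ≤ (m + 1 : ℝ) := by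
      have : (0 : ℝ) ≤ (m : ℝ) := Nat.cast_nonneg m
      linarith
    have : 1 / (m + 1 : ℝ) ≤ 1 := by
      rw [div_le_one (by positivity)]; exact h1
    linarith
  induction t with
  | zero => simpa using tvDist_le_one _ _
  | succ t ih =>
    rw [stepsPMF_succ']
    calc tvDist ((stepsPMF (posKer (m + 1)) t (σ₀⁻¹ c)).bind (posKer (m + 1)))
          (PMF.uniformOfFintype (Fin (m + 1)))
        ≤ (1 - 1 / (m + 1 : ℝ)) * tvDist (stepsPMF (posKer (m + 1)) t (σ₀⁻¹ c))
            (PMF.uniformOfFintype (Fin (m + 1))) := contract m _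
      _ ≤ (1 - 1 / (m + 1 : ℝ)) * (1 - 1 / (m + 1 : ℝ)) ^ t :=
          mul_le_mul_of_nonneg_left ih hfac
      _ = (1 - 1 / (m + 1 : ℝ)) ^ (t + 1) := by rw [pow_succ]; ring
end

section
/- Let n ≥ 2. For a deck of n cards after t inverse riffle shuffles, starting from any fixed order, the total variation distance between the distribution of the label of the top card and the uniform distribution on the n labels is at most (n − 1)/2^t. In particular, for ε > 0, after t ≥ log₂(n − 1) − log₂(ε) steps this distance is at most ε. -/
open scoped Classical

/-- The value of a bit string, reading the first coordinate as most significant (so comparison of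
values is lexicographic comparison of strings). -/
def strVal (t : ℕ) (s : Fin t → Bool) : ℕ :=
  ∑ i : Fin t, if s i then 2 ^ (t - 1 - (i : ℕ)) else 0

/-- The deck obtained from the deck order `σ₀` (where `σ₀ p` is the label of the card in
position `p`, position `0` being the top) after `t` inverse riffle shuffles realised by the bit
strings `s`: the card with label `c` is assigned the string `s c` and the deck is sorted stably
by these strings (cards with lexicographically smaller strings nearer the top, cards with equal
strings keeping their original relative order). -/
noncomputable def riffleResult {n : ℕ} (t : ℕ) (σ₀ : Equiv.Perm (Fin n))
    (s : Fin n → Fin t → Bool) : Equiv.Perm (Fin n) :=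
  (Tuple.sort (fun p => strVal t (s (σ₀ p)))).trans σ₀

section RiffleAux

open Finset
open scoped ENNReal

lemma strVal_eq (t : ℕ) (s : Fin t → Bool) :
    strVal t s = (finFunctionFinEquiv (fun j : Fin t => if s j.rev then (1 : Fin 2) else 0) : ℕ) := by
  rw [finFunctionFinEquiv_apply, strVal]
  refine Fintype.sum_equiv (Fin.revPerm) _ _ fun i => ?_
  have h3 : t - 1 - (i:ℕ) = t - ((i:ℕ)+1) := by omega
  simp [Fin.val_rev, apply_ite (Fin.val : Fin 2 → ℕ), h3]

lemma strVal_injective (t : ℕ) : Function.Injective (strVal t) := by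
  intro s s' h
  rw [strVal_eq, strVal_eq] at h
  have h2 := finFunctionFinEquiv.injective (Fin.val_injective (by exact_mod_cast h))
  funext i
  have := congrFun h2 i.rev
  simp only [Fin.rev_rev] at this
  by_cases h1 : s i <;> by_cases h2 : s' i <;> simp_all

lemma sort_zero_min {n : ℕ} [NeZero n] (f : Fin n → ℕ) (p : Fin n) :
    f (Tuple.sort f 0) < f p ∨ (f (Tuple.sort f 0) = f p ∧ Tuple.sort f 0 ≤ p) := by
  obtain ⟨hmono, hties⟩ := (Tuple.eq_sort_iff (f := f) (σ := Tuple.sort f)).mp rfl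
  set σ := Tuple.sort f
  set i := σ.symm p with hi
  have hp : σ i = p := Equiv.apply_symm_apply _ _
  have h0 : f (σ 0) ≤ f (σ i) := hmono (Fin.zero_le i)
  rw [hp] at h0
  rcases h0.lt_or_eq with h | h
  · exact Or.inl h
  · refine Or.inr ⟨h, ?_⟩
    rcases eq_or_lt_of_le (Fin.zero_le i) with h1 | h1
    · rw [← hp, ← h1]
    · exact le_of_lt (by rw [← hp]; exact hties 0 i h1 (by rw [hp, h]))

/-- `c` is the label of the top card: it minimizes the pair (string value, position)
lexicographically. -/
def RTop {n t : ℕ} (σ₀ : Equiv.Perm (Fin n)) (s : Fin n → Fin t → Bool) (c : Fin n) : Prop :=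
  ∀ d, strVal t (s c) < strVal t (s d) ∨
    (strVal t (s c) = strVal t (s d) ∧ σ₀.symm c ≤ σ₀.symm d)

lemma rTop_riffle {n t : ℕ} [NeZero n] (σ₀ : Equiv.Perm (Fin n)) (s : Fin n → Fin t → Bool) :
    RTop σ₀ s (riffleResult t σ₀ s 0) := by
  intro d
  have h := sort_zero_min (fun p => strVal t (s (σ₀ p))) (σ₀.symm d)
  simp only [Equiv.apply_symm_apply] at h
  unfold riffleResult
  simp only [Equiv.trans_apply]
  rcases h with h | ⟨h1, h2⟩
  · exact Or.inl h
  · exact Or.inr ⟨h1, by simpa using h2⟩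

lemma rTop_unique {n t : ℕ} {σ₀ : Equiv.Perm (Fin n)} {s : Fin n → Fin t → Bool} {c c' : Fin n}
    (h : RTop σ₀ s c) (h' : RTop σ₀ s c') : c = c' := by
  rcases h c' with h1 | ⟨h1, h2⟩ <;> rcases h' c with h1' | ⟨h1', h2'⟩ <;>
    first
    | omega
    | exact σ₀.symm.injective.eq_iff.mp (le_antisymm h2 h2')

lemma riffle_eq_iff {n t : ℕ} [NeZero n] (σ₀ : Equiv.Perm (Fin n)) (s : Fin n → Fin t → Bool)
    (c : Fin n) : riffleResult t σ₀ s 0 = c ↔ RTop σ₀ s c :=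
  ⟨fun h => h ▸ rTop_riffle σ₀ s, fun h => rTop_unique (rTop_riffle σ₀ s) h⟩

/-- The bit strings for which card `c` is the strict unique minimizer of the string value. -/
noncomputable def Bset (n t : ℕ) (c : Fin n) : Finset (Fin n → Fin t → Bool) :=
  univ.filter (fun s => ∀ d, d ≠ c → strVal t (s c) < strVal t (s d))

/-- The bit strings for which the string of card `j` equals the minimal string among the cards
before `j`. -/
noncomputable def Cset (n t : ℕ) (j : Fin n) : Finset (Fin n → Fin t → Bool) :=
  univ.filter (fun s => ∃ i, i < j ∧ (∀ i', i' < j → strVal t (s i) ≤ strVal t (s i')) ∧ s j = s i)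

lemma mem_Cset {n t : ℕ} {j : Fin n} {s : Fin n → Fin t → Bool} :
    s ∈ Cset n t j ↔ ∃ i, i < j ∧ (∀ i', i' < j → strVal t (s i) ≤ strVal t (s i')) ∧ s j = s i := by
  rw [Cset, mem_filter]; simp

lemma mem_Bset {n t : ℕ} {c : Fin n} {s : Fin n → Fin t → Bool} :
    s ∈ Bset n t c ↔ ∀ d, d ≠ c → strVal t (s c) < strVal t (s d) := by
  rw [Bset, mem_filter]; simp

lemma Bcard_eq (n t : ℕ) (c c' : Fin n) : (Bset n t c).card = (Bset n t c').card := by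
  apply Finset.card_bij' (fun s _ => s ∘ Equiv.swap c c') (fun s _ => s ∘ Equiv.swap c c')
  · intro s hs
    rw [mem_Bset] at hs ⊢
    intro d hd
    have h1 : (s ∘ Equiv.swap c c') c' = s c := by simp [Equiv.swap_apply_right]
    rw [h1]
    refine hs (Equiv.swap c c' d) ?_
    intro h
    apply hd
    have h2 := congrArg (Equiv.swap c c') h
    rwa [Equiv.swap_apply_self, Equiv.swap_apply_left] at h2
  · intro s hs
    rw [mem_Bset] at hs ⊢
    intro d hd
    have h1 : (s ∘ Equiv.swap c c') c = s c' := by simp [Equiv.swap_apply_left]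
    rw [h1]
    refine hs (Equiv.swap c c' d) ?_
    intro h
    apply hd
    have h2 := congrArg (Equiv.swap c c') h
    rwa [Equiv.swap_apply_self, Equiv.swap_apply_right] at h2
  · intro s _; funext i; simp [Function.comp, Equiv.swap_apply_self]
  · intro s _; funext i; simp [Function.comp, Equiv.swap_apply_self]

lemma Bdisjoint (n t : ℕ) {c c' : Fin n} (h : c ≠ c') : Disjoint (Bset n t c) (Bset n t c') := by
  rw [Finset.disjoint_left]
  intro s hs hs'
  rw [mem_Bset] at hs hs'
  exact absurd (hs c' h.symm) (not_lt.mpr (le_of_lt (hs' c h)))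

lemma Ccard (n t : ℕ) (j : Fin n) : (Cset n t j).card ≤ (2^t)^(n-1) := by
  have key : ((Finset.univ : Finset ({ i : Fin n // i ≠ j } → Fin t → Bool))).card = (2^t)^(n-1) := by
    have h1 : Fintype.card { i : Fin n // i ≠ j } = n - 1 := by
      have : Fintype.card { i : Fin n // i ≠ j } = Fintype.card { i : Fin n // ¬ (i = j) } := rfl
      rw [this, Fintype.card_subtype_compl, Fintype.card_fin, Fintype.card_subtype_eq]
    simp [Finset.card_univ, h1]
  rw [← key]
  apply Finset.card_le_card_of_injOn (fun s => fun i : { i : Fin n // i ≠ j } => s i.1)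
    (fun _ _ => mem_univ _)
  intro s hs s' hs' h
  rw [Finset.mem_coe, mem_Cset] at hs; rw [Finset.mem_coe, mem_Cset] at hs'
  obtain ⟨i, hij, hmin, hsj⟩ := hs
  obtain ⟨i', hij', hmin', hsj'⟩ := hs'
  have hoff : ∀ d, d ≠ j → s d = s' d := fun d hd => congrFun h ⟨d, hd⟩
  have hii : s i = s' i := hoff i (ne_of_lt hij)
  have hii' : s i' = s' i' := hoff i' (ne_of_lt hij')
  have h1 : strVal t (s i) ≤ strVal t (s i') := hmin i' hij'
  have h2 : strVal t (s' i') ≤ strVal t (s' i) := hmin' i hij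
  rw [← hii, ← hii'] at h2
  have hval : strVal t (s i) = strVal t (s i') := le_antisymm h1 h2
  have hjj : s j = s' j := by
    rw [hsj, hsj']
    apply strVal_injective
    rw [← hii']
    exact hval
  funext d
  by_cases hd : d = j
  · rw [hd]; exact hjj
  · exact hoff d hd

lemma exists_C (n t : ℕ) [NeZero n] (s : Fin n → Fin t → Bool)
    (h : ∀ c, s ∉ Bset n t c) : ∃ j : Fin n, j ≠ 0 ∧ s ∈ Cset n t j := by
  obtain ⟨c₀, -, hc₀⟩ := Finset.exists_min_image univ (fun c => strVal t (s c)) ⟨0, mem_univ _⟩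
  have hB := h c₀
  rw [mem_Bset] at hB; push_neg at hB
  obtain ⟨d, hd, hdle⟩ := hB
  have hdeq : strVal t (s d) = strVal t (s c₀) := le_antisymm hdle (hc₀ d (mem_univ _))
  obtain ⟨a, b, hab, ham, hbm⟩ : ∃ a b : Fin n, a < b ∧
      strVal t (s a) = strVal t (s c₀) ∧ strVal t (s b) = strVal t (s c₀) := by
    rcases lt_or_gt_of_ne hd with h1 | h1
    · exact ⟨d, c₀, h1, hdeq, rfl⟩
    · exact ⟨c₀, d, h1, rfl, hdeq⟩
  refine ⟨b, ?_, ?_⟩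
  · intro hb0
    rw [hb0] at hab
    exact absurd hab (not_lt.mpr (Fin.zero_le a))
  · rw [mem_Cset]
    obtain ⟨i₀, hi₀mem, hi₀⟩ := Finset.exists_min_image (univ.filter (· < b))
      (fun i => strVal t (s i)) ⟨a, by simp [hab]⟩
    rw [mem_filter] at hi₀mem
    refine ⟨i₀, hi₀mem.2, fun i' hi' => hi₀ i' (by simp [hi']), ?_⟩
    have h1 : strVal t (s i₀) ≤ strVal t (s a) := hi₀ a (by simp [hab])
    have h2 : strVal t (s c₀) ≤ strVal t (s i₀) := hc₀ i₀ (mem_univ _)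
    rw [ham] at h1
    have : strVal t (s i₀) = strVal t (s c₀) := le_antisymm h1 h2
    exact (strVal_injective t (by rw [hbm, this])).symm

lemma count_main (n t : ℕ) [NeZero n] :
    ((2^t : ℕ))^n ≤ n * (Bset n t 0).card + (n-1) * (2^t)^(n-1) := by
  have hsub : (univ : Finset (Fin n → Fin t → Bool)) ⊆
      (univ.biUnion (Bset n t)) ∪ ((univ.filter (· ≠ (0 : Fin n))).biUnion (Cset n t)) := by
    intro s _
    by_cases hB : ∃ c, s ∈ Bset n t c
    · obtain ⟨c, hc⟩ := hB
      exact mem_union_left _ (mem_biUnion.mpr ⟨c, mem_univ _, hc⟩)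
    · push_neg at hB
      obtain ⟨j, hj0, hj⟩ := exists_C n t s hB
      exact mem_union_right _ (mem_biUnion.mpr ⟨j, by simp [hj0], hj⟩)
  have hcard := Finset.card_le_card hsub
  have hu : (univ : Finset (Fin n → Fin t → Bool)).card = (2^t)^n := by
    simp [Finset.card_univ]
  rw [hu] at hcard
  calc ((2^t : ℕ))^n ≤ _ := hcard
    _ ≤ (univ.biUnion (Bset n t)).card
        + ((univ.filter (· ≠ (0 : Fin n))).biUnion (Cset n t)).card := Finset.card_union_le _ _
    _ ≤ n * (Bset n t 0).card + (n-1) * (2^t)^(n-1) := by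
        gcongr
        · calc (univ.biUnion (Bset n t)).card ≤ ∑ c, (Bset n t c).card :=
                Finset.card_biUnion_le
            _ = ∑ _c : Fin n, (Bset n t 0).card := by
                exact Finset.sum_congr rfl fun c _ => Bcard_eq n t c 0
            _ = n * (Bset n t 0).card := by simp [mul_comm]
        · calc ((univ.filter (· ≠ (0 : Fin n))).biUnion (Cset n t)).card
              ≤ ∑ j ∈ univ.filter (· ≠ (0 : Fin n)), (Cset n t j).card := Finset.card_biUnion_le
            _ ≤ ∑ _j ∈ univ.filter (· ≠ (0 : Fin n)), (2^t)^(n-1) :=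
                Finset.sum_le_sum fun j _ => Ccard n t j
            _ = (n-1) * (2^t)^(n-1) := by
                rw [Finset.sum_const, smul_eq_mul]
                congr 1
                rw [Finset.filter_ne', Finset.card_erase_of_mem (mem_univ _), Finset.card_univ,
                  Fintype.card_fin]

lemma count_le (n t : ℕ) [NeZero n] : n * (Bset n t 0).card ≤ ((2^t : ℕ))^n := by
  have h : (univ.biUnion (Bset n t)).card = ∑ c, (Bset n t c).card :=
    Finset.card_biUnion fun c _ c' _ h => Bdisjoint n t h
  have h2 : (univ.biUnion (Bset n t)).card ≤ ((2^t : ℕ))^n := by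
    have := Finset.card_le_card (Finset.subset_univ (univ.biUnion (Bset n t)))
    simpa [Finset.card_univ] using this
  rw [h] at h2
  calc n * (Bset n t 0).card = ∑ _c : Fin n, (Bset n t 0).card := by simp [mul_comm]
    _ = ∑ c, (Bset n t c).card := Finset.sum_congr rfl fun c _ => (Bcard_eq n t c 0).symm
    _ ≤ _ := h2

lemma pmf_map_toReal {α β : Type*} [Fintype α] [Nonempty α] [Fintype β] (g : α → β) (b : β) :
    (((PMF.uniformOfFintype α).map g) b).toReal
      = ((univ.filter (fun a => g a = b)).card : ℝ) / (Fintype.card α : ℝ) := by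
  rw [PMF.map_apply, tsum_fintype]
  have h1 : ∀ a : α, (if b = g a then (PMF.uniformOfFintype α) a else 0)
      = (if g a = b then ((Fintype.card α : ℝ≥0∞))⁻¹ else 0) := by
    intro a
    simp only [PMF.uniformOfFintype_apply, eq_comm]
  simp_rw [h1]
  rw [← Finset.sum_filter, Finset.sum_const, nsmul_eq_mul]
  rw [ENNReal.toReal_mul, ENNReal.toReal_inv]
  simp [div_eq_mul_inv]

end RiffleAux

/-- After `t` inverse riffle shuffles from any fixed order, the label of the top card is within
`(n-1)/2^t` of uniform in total variation; in particular within `ε` once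
`t ≥ log₂(n-1) - log₂ ε`. -/
theorem riffle_top_card (n : ℕ) [NeZero n] (hn : 2 ≤ n) (σ₀ : Equiv.Perm (Fin n)) :
    (∀ t : ℕ,
      tvDist ((PMF.uniformOfFintype (Fin n → Fin t → Bool)).map
          (fun s => riffleResult t σ₀ s 0))
        (PMF.uniformOfFintype (Fin n)) ≤ ((n : ℝ) - 1) / 2 ^ t)
    ∧ ∀ ε : ℝ, 0 < ε → ∀ t : ℕ,
        Real.logb 2 ((n : ℝ) - 1) - Real.logb 2 ε ≤ (t : ℝ) →
        tvDist ((PMF.uniformOfFintype (Fin n → Fin t → Bool)).map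
            (fun s => riffleResult t σ₀ s 0))
          (PMF.uniformOfFintype (Fin n)) ≤ ε := by
  classical
  have hn0 : 0 < n := by omega
  have hnR : (0:ℝ) < n := by exact_mod_cast hn0
  have part1 : ∀ t : ℕ,
      tvDist ((PMF.uniformOfFintype (Fin n → Fin t → Bool)).map
          (fun s => riffleResult t σ₀ s 0))
        (PMF.uniformOfFintype (Fin n)) ≤ ((n : ℝ) - 1) / 2 ^ t := by
    intro t
    set g : (Fin n → Fin t → Bool) → Fin n := fun s => riffleResult t σ₀ s 0 with hg
    set b : ℕ := (Bset n t 0).card with hb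
    set a : Fin n → ℕ := fun c => (Finset.univ.filter (fun s => g s = c)).card with ha
    set Nr : ℝ := (2:ℝ)^t with hNr
    set Ωr : ℝ := Nr^n with hΩr
    have hNpos : (0:ℝ) < Nr := by positivity
    have hΩpos : (0:ℝ) < Ωr := by positivity
    have hcardΩ : ((Fintype.card (Fin n → Fin t → Bool) : ℕ) : ℝ) = Ωr := by
      rw [hΩr, hNr]; push_cast; simp
    -- sum of fiber cardinalities
    have hA_sum : ∑ c, (a c : ℝ) = Ωr := by
      have h1 : (Finset.univ : Finset (Fin n → Fin t → Bool)).card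
          = ∑ c : Fin n, a c :=
        Finset.card_eq_sum_card_fiberwise (fun x _ => Finset.mem_univ (g x))
      have h2 : (((Finset.univ : Finset (Fin n → Fin t → Bool)).card : ℕ) : ℝ) = Ωr := by
        rw [Finset.card_univ]; exact hcardΩ
      rw [h1] at h2
      push_cast at h2
      exact h2
    -- b ≤ a c
    have hBA : ∀ c, b ≤ a c := by
      intro c
      have : (Bset n t c).card ≤ a c := by
        apply Finset.card_le_card
        intro s hs
        rw [mem_Bset] at hs
        rw [Finset.mem_filter]
        refine ⟨Finset.mem_univ _, ?_⟩
        show riffleResult t σ₀ s 0 = c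
        rw [riffle_eq_iff]
        intro d
        by_cases hd : d = c
        · subst hd; exact Or.inr ⟨rfl, le_refl _⟩
        · exact Or.inl (hs d hd)
      rw [hb, Bcard_eq n t 0 c]; exact this
    -- counting inequalities, cast to ℝ
    have hc1 : Ωr ≤ (n : ℝ) * b + ((n:ℝ) - 1) * Nr^(n-1) := by
      have h := count_main n t
      have hcast : ((2:ℝ)^t)^n ≤ (n : ℝ) * (b:ℝ) + (((n-1 : ℕ)) : ℝ) * ((2:ℝ)^t)^(n-1) := by
        exact_mod_cast h
      have h2 : (((n-1 : ℕ)) : ℝ) = (n:ℝ) - 1 := by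
        rw [Nat.cast_sub (by omega : 1 ≤ n), Nat.cast_one]
      rw [h2] at hcast
      rw [hΩr, hNr]
      exact hcast
    have hc2 : (n : ℝ) * b ≤ Ωr := by
      have h := count_le n t
      have hcast : ((n * (Bset n t 0).card : ℕ) : ℝ) ≤ (((2^t : ℕ))^n : ℝ) := by exact_mod_cast h
      have h1 : (((2^t : ℕ))^n : ℝ) = Ωr := by rw [hΩr, hNr]; push_cast; ring
      rw [h1] at hcast
      push_cast at hcast
      exact hcast
    -- pmf values
    have hμ : ∀ c : Fin n,
        ((((PMF.uniformOfFintype (Fin n → Fin t → Bool)).map g) c)).toReal = (a c : ℝ) / Ωr := by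
      intro c
      rw [pmf_map_toReal g c, hcardΩ]
      congr! 2
      rw [ha]
      congr 1
      apply Finset.filter_congr_decidable
    have hν : ∀ c : Fin n, ((PMF.uniformOfFintype (Fin n)) c).toReal = (n:ℝ)⁻¹ := by
      intro c
      simp [PMF.uniformOfFintype_apply]
    -- assemble
    rw [tvDist]
    have hrw : ∀ c : Fin n,
        |((((PMF.uniformOfFintype (Fin n → Fin t → Bool)).map g) c)).toReal
          - ((PMF.uniformOfFintype (Fin n)) c).toReal|
        = |(a c : ℝ)/Ωr - (n:ℝ)⁻¹| := by
      intro c; rw [hμ c, hν c]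
    rw [Finset.sum_congr rfl (fun c _ => hrw c)]
    -- key bounds
    have hbn : (b:ℝ)/Ωr ≤ (n:ℝ)⁻¹ := by
      rw [div_le_iff₀ hΩpos, inv_mul_eq_div, le_div_iff₀ hnR]
      linarith [hc2]
    have hterm : ∀ c : Fin n, |(a c : ℝ)/Ωr - (n:ℝ)⁻¹|
        ≤ ((a c : ℝ)/Ωr - (b:ℝ)/Ωr) + ((n:ℝ)⁻¹ - (b:ℝ)/Ωr) := by
      intro c
      have h1 : (b:ℝ)/Ωr ≤ (a c:ℝ)/Ωr := by
        gcongr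
        exact hBA c
      rw [abs_sub_le_iff]
      constructor <;> linarith
    have hsum : ∑ c : Fin n, (((a c : ℝ)/Ωr - (b:ℝ)/Ωr) + ((n:ℝ)⁻¹ - (b:ℝ)/Ωr))
        = 2 - 2 * (n:ℝ) * ((b:ℝ)/Ωr) := by
      rw [Finset.sum_add_distrib, Finset.sum_sub_distrib, Finset.sum_const, Finset.sum_const,
        Finset.card_univ, Fintype.card_fin, ← Finset.sum_div, hA_sum,
        div_self hΩpos.ne', nsmul_eq_mul, nsmul_eq_mul, mul_sub, mul_inv_cancel₀ hnR.ne']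
      ring
    have hkey : 2 - 2 * (n:ℝ) * ((b:ℝ)/Ωr) ≤ 2 * ((n:ℝ) - 1) / Nr := by
      have hΩm : Ωr = Nr^(n-1) * Nr := by
        rw [hΩr, ← pow_succ]
        congr 1
        omega
      have h1 : (1:ℝ) ≤ (n:ℝ) * ((b:ℝ)/Ωr) + ((n:ℝ) - 1) / Nr := by
        have h2 : Ωr * Ωr⁻¹ ≤ ((n : ℝ) * b + ((n:ℝ) - 1) * Nr^(n-1)) * Ωr⁻¹ := by
          apply mul_le_mul_of_nonneg_right hc1 (inv_nonneg.mpr hΩpos.le)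
        rw [mul_inv_cancel₀ hΩpos.ne'] at h2
        have h3 : ((n : ℝ) * b + ((n:ℝ) - 1) * Nr^(n-1)) * Ωr⁻¹
            = (n:ℝ) * ((b:ℝ)/Ωr) + ((n:ℝ) - 1) / Nr := by
          rw [hΩm]
          have hNm : (0:ℝ) < Nr^(n-1) := by positivity
          field_simp
        rw [h3] at h2
        exact h2
      have h4 : 1 - (n:ℝ)*((b:ℝ)/Ωr) ≤ ((n:ℝ)-1)/Nr := by linarith
      calc 2 - 2*(n:ℝ)*((b:ℝ)/Ωr) = 2*(1 - (n:ℝ)*((b:ℝ)/Ωr)) := by ring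
        _ ≤ 2*(((n:ℝ)-1)/Nr) := by linarith
        _ = 2*((n:ℝ)-1)/Nr := by ring
    calc (1/2 : ℝ) * ∑ c : Fin n, |(a c : ℝ)/Ωr - (n:ℝ)⁻¹|
        ≤ (1/2 : ℝ) * ∑ c : Fin n, (((a c : ℝ)/Ωr - (b:ℝ)/Ωr) + ((n:ℝ)⁻¹ - (b:ℝ)/Ωr)) := by
          apply mul_le_mul_of_nonneg_left (Finset.sum_le_sum fun c _ => hterm c) (by norm_num)
      _ = (1/2 : ℝ) * (2 - 2 * (n:ℝ) * ((b:ℝ)/Ωr)) := by rw [hsum]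
      _ ≤ (1/2 : ℝ) * (2 * ((n:ℝ) - 1) / Nr) := by
          apply mul_le_mul_of_nonneg_left hkey (by norm_num)
      _ = ((n : ℝ) - 1) / 2 ^ t := by rw [hNr]; ring
  refine ⟨part1, ?_⟩
  intro ε hε t ht
  refine (part1 t).trans ?_
  have hn1 : (0:ℝ) < (n:ℝ) - 1 := by
    have : (2:ℝ) ≤ (n:ℝ) := by exact_mod_cast hn
    linarith
  have hlog : Real.logb 2 (((n:ℝ)-1)/ε) ≤ (t:ℝ) := by
    rw [Real.logb_div (ne_of_gt hn1) (ne_of_gt hε)]; exact ht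
  have h2 : ((n:ℝ)-1)/ε ≤ (2:ℝ)^(t:ℝ) := by
    exact (Real.logb_le_iff_le_rpow (by norm_num) (div_pos hn1 hε)).mp hlog
  rw [Real.rpow_natCast] at h2
  rw [div_le_iff₀ hε] at h2
  rw [div_le_iff₀ (by positivity : (0:ℝ) < (2:ℝ)^t)]
  linarith
end
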